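/- Let C := {f ∈ L¹[0,1] : f ≥ 0 a.e. and ∫₀¹ f = 1} and, for a ∈ [0,1], let C_a be the convex hull of C ∪ {a·𝟙}, where 𝟙 is the constant function 1. Let (λ_n) ⊆ [0,1] with λ_n → λ, let (f_n) ⊆ C, and suppose the sequence g_n := λ_n f_n + (1 − λ_n)·a·𝟙 converges Lebesgue-almost everywhere to some g ∈ L¹[0,1]. Then there exists h ∈ C_a such that limsup_n ‖g_n − h‖₁ ≤ (1 + a)·limsup_n ‖g_n − g‖₁. -/

import Mathlib

/-!
Write `gₙ = λₙ fₙ + (1 - λₙ) a 𝟙`. The nonnegative functions `λₙ fₙ = gₙ - (1 - λₙ) a 𝟙` converge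
a.e. to `u := g - (1 - λ) a 𝟙`, so by Fatou's lemma `u ≥ 0` and `c := ∫ u ≤ λ`. Then
`h := u + (1 - c) a 𝟙 = c (u / c) + (1 - c) a 𝟙` lies in `C_a` (for `c = 0`, `u = 0` and `h = a 𝟙`),
and `‖g - h‖ = a (λ - c)`. Finally `λ - c = lim ∫ (gₙ - g) ≤ limsup ‖gₙ - g‖`, and the triangle
inequality `‖gₙ - h‖ ≤ ‖gₙ - g‖ + ‖g - h‖` gives the claim.
-/

open MeasureTheory Filter Topology

/-- Lebesgue measure on `[0,1]`. -/
noncomputable def μ01 : Measure ℝ := volume.restrict (Set.Icc 0 1)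

instance : IsFiniteMeasure μ01 := by
  constructor
  simp [μ01, Real.volume_Icc]

/-- The constant function `1` as an element of `L¹[0,1]`. -/
noncomputable def oneL1 : Lp ℝ 1 μ01 := (memLp_const (1 : ℝ)).toLp (fun _ => (1 : ℝ))

/-- `C = {f ∈ L¹[0,1] : f ≥ 0 a.e., ∫ f = 1}`. -/
noncomputable def posProbC : Set (Lp ℝ 1 μ01) :=
  {f | (∀ᵐ t ∂μ01, 0 ≤ f t) ∧ ∫ t, f t ∂μ01 = 1}

section Fatou

variable {α : Type*} [MeasurableSpace α] {μ : Measure α}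

theorem ae_nonneg_of_tendsto_ae {F : ℕ → α → ℝ} {f : α → ℝ} (hF : ∀ n, 0 ≤ᵐ[μ] F n)
    (hlim : ∀ᵐ x ∂μ, Tendsto (F · x) atTop (𝓝 (f x))) : 0 ≤ᵐ[μ] f := by
  filter_upwards [ae_all_iff.2 hF, hlim] with x hFx hx
  exact ge_of_tendsto' hx hFx

theorem integral_le_of_tendsto_ae {F : ℕ → α → ℝ} {f : α → ℝ} {I : ℝ}
    (hF : ∀ n, Integrable (F n) μ) (hF0 : ∀ n, 0 ≤ᵐ[μ] F n) (hf : Integrable f μ)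
    (hlim : ∀ᵐ x ∂μ, Tendsto (F · x) atTop (𝓝 (f x)))
    (hI : Tendsto (fun n => ∫ x, F n x ∂μ) atTop (𝓝 I)) : ∫ x, f x ∂μ ≤ I := by
  have hI0 : 0 ≤ I := ge_of_tendsto' hI fun n => integral_nonneg_of_ae (hF0 n)
  have hofReal := ENNReal.continuous_ofReal.tendsto
  rw [← ENNReal.ofReal_le_ofReal_iff hI0,
    ofReal_integral_eq_lintegral_ofReal hf (ae_nonneg_of_tendsto_ae hF0 hlim)]
  calc ∫⁻ x, ENNReal.ofReal (f x) ∂μ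
      = ∫⁻ x, liminf (fun n => ENNReal.ofReal (F n x)) atTop ∂μ :=
        lintegral_congr_ae (hlim.mono fun x hx => ((hofReal _).comp hx).liminf_eq.symm)
    _ ≤ liminf (fun n => ∫⁻ x, ENNReal.ofReal (F n x) ∂μ) atTop :=
        lintegral_liminf_le' fun n => (hF n).aemeasurable.ennreal_ofReal
    _ = ENNReal.ofReal I := by
        simp_rw [← ofReal_integral_eq_lintegral_ofReal (hF _) (hF0 _)]
        exact ((hofReal _).comp hI).liminf_eq

end Fatou

section Limsup

variable {E : Type*} [SeminormedAddCommGroup E] {x : ℕ → E}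

theorem limsup_norm_sub_le_add (g h : E)
    (hbdd : IsBoundedUnder (· ≤ ·) atTop fun n => ‖x n - g‖) :
    limsup (fun n => ‖x n - h‖) atTop ≤ limsup (fun n => ‖x n - g‖) atTop + ‖g - h‖ := by
  have hcobdd {y : E} : IsCoboundedUnder (· ≤ ·) atTop fun n => ‖x n - y‖ :=
    (isBoundedUnder_of ⟨0, fun n => norm_nonneg (x n - y)⟩).isCoboundedUnder_le
  rw [← limsup_add_const _ _ _ hbdd hcobdd]
  refine limsup_le_limsup (.of_forall fun n => norm_sub_le_norm_sub_add_norm_sub _ g _) hcobdd ?_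
  obtain ⟨b, hb⟩ := hbdd
  exact ⟨b + ‖g - h‖,
    eventually_map.2 ((eventually_map.1 hb).mono fun n hn => (add_le_add_iff_right _).2 hn)⟩

theorem sub_le_limsup_norm_sub [NormedSpace ℝ E] (φ : E →L[ℝ] ℝ) (hφ : ‖φ‖ ≤ 1) (g : E) {I : ℝ}
    (hbdd : IsBoundedUnder (· ≤ ·) atTop fun n => ‖x n - g‖)
    (hI : Tendsto (fun n => φ (x n)) atTop (𝓝 I)) :
    I - φ g ≤ limsup (fun n => ‖x n - g‖) atTop := by
  have hle n : φ (x n) - φ g ≤ ‖x n - g‖ := by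
    simpa [← map_sub] using (le_abs_self _).trans (φ.le_of_opNorm_le hφ (x n - g))
  have hlim := hI.sub_const (φ g)
  rw [← hlim.limsup_eq]
  exact limsup_le_limsup (.of_forall hle) hlim.isCoboundedUnder_le hbdd

end Limsup

instance : IsProbabilityMeasure μ01 :=
  ⟨by simp [μ01, Real.volume_Icc]⟩

theorem norm_oneL1 : ‖oneL1‖ = 1 := by
  simp [oneL1, MemLp.toLp_const, Lp.norm_const]

theorem coeFn_oneL1 : ⇑oneL1 =ᵐ[μ01] 1 :=
  Lp.coeFn_const 1 μ01 (1 : ℝ)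

theorem L1.integral_oneL1 : L1.integral oneL1 = 1 := by
  simp [L1.integral_eq_integral, integral_congr_ae coeFn_oneL1]

theorem coeFn_sub_smul_oneL1 (v : Lp ℝ 1 μ01) (c : ℝ) :
    ⇑(v - c • oneL1) =ᵐ[μ01] fun t => v t - c := by
  filter_upwards [Lp.coeFn_sub v (c • oneL1), Lp.coeFn_smul c oneL1,
    coeFn_oneL1] with t hsub hsmul hone
  rw [hsub, Pi.sub_apply, hsmul, Pi.smul_apply, hone, Pi.one_apply, smul_eq_mul, mul_one]

theorem L1.integral_of_mem_posProbC {f : Lp ℝ 1 μ01} (hf : f ∈ posProbC) : L1.integral f = 1 :=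
  (L1.integral_eq_integral f).trans hf.2

theorem norm_of_mem_posProbC {f : Lp ℝ 1 μ01} (hf : f ∈ posProbC) : ‖f‖ = 1 := by
  rw [L1.norm_eq_integral_norm, ← hf.2]
  exact integral_congr_ae (hf.1.mono fun t ht => Real.norm_of_nonneg ht)

theorem inv_smul_mem_posProbC {u : Lp ℝ 1 μ01} (hu : 0 ≤ᵐ[μ01] u) (hpos : 0 < L1.integral u) :
    (L1.integral u)⁻¹ • u ∈ posProbC := by
  refine ⟨?_, ?_⟩
  · filter_upwards [Lp.coeFn_smul (L1.integral u)⁻¹ u, hu] with t hsmul hut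
    rw [hsmul]
    exact mul_nonneg (inv_nonneg.2 hpos.le) hut
  · rw [← L1.integral_eq_integral, L1.integral_smul, smul_eq_mul, inv_mul_cancel₀ hpos.ne']

theorem add_smul_oneL1_mem_convexHull {u : Lp ℝ 1 μ01} (hu : 0 ≤ᵐ[μ01] u)
    (hle : L1.integral u ≤ 1) (a : ℝ) :
    u + ((1 - L1.integral u) * a) • oneL1 ∈ convexHull ℝ (posProbC ∪ {a • oneL1}) := by
  set c := L1.integral u with hc
  have hc0 : 0 ≤ c := by
    rw [hc, L1.integral_eq_integral]
    exact integral_nonneg_of_ae hu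
  rcases hc0.eq_or_lt with hzero | hpos
  · have hu0 : u = 0 := by
      rw [Lp.eq_zero_iff_ae_eq_zero, ← integral_eq_zero_iff_of_nonneg_ae hu (L1.integrable_coeFn u),
        ← L1.integral_eq_integral, ← hc, hzero]
    rw [← hzero, hu0, zero_add, sub_zero, one_mul]
    exact subset_convexHull ℝ _ (Or.inr rfl)
  · refine segment_subset_convexHull (Set.mem_union_left _ (inv_smul_mem_posProbC hu hpos))
      (Set.mem_union_right _ (Set.mem_singleton _))
      ⟨c, 1 - c, hpos.le, sub_nonneg.2 hle, add_sub_cancel c 1, ?_⟩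
    rw [smul_inv_smul₀ hpos.ne', smul_smul]

theorem L1.integral_smul_add_smul_oneL1 {f : Lp ℝ 1 μ01} (hf : f ∈ posProbC) (lam a : ℝ) :
    L1.integral (lam • f + (1 - lam) • (a • oneL1)) = lam + (1 - lam) * a := by
  simp [L1.integral_add, L1.integral_smul, L1.integral_of_mem_posProbC hf, L1.integral_oneL1]

theorem norm_smul_add_smul_oneL1_le {f : Lp ℝ 1 μ01} (hf : f ∈ posProbC) {lam a : ℝ}
    (hlam : lam ∈ Set.Icc (0 : ℝ) 1) (ha : 0 ≤ a) :
    ‖lam • f + (1 - lam) • (a • oneL1)‖ ≤ 1 + a :=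
  mem_closedBall_zero_iff.1 <| convex_closedBall (0 : Lp ℝ 1 μ01) (1 + a)
    (by simp [norm_of_mem_posProbC hf, ha]) (by simp [norm_smul, norm_oneL1, abs_of_nonneg ha])
    hlam.1 (sub_nonneg.2 hlam.2) (add_sub_cancel _ _)

theorem tendsto_ae_sub_smul_oneL1 {x : ℕ → Lp ℝ 1 μ01} {y : Lp ℝ 1 μ01} {c : ℕ → ℝ} {c₀ : ℝ}
    (hx : ∀ᵐ t ∂μ01, Tendsto (fun n => x n t) atTop (𝓝 (y t)))
    (hc : Tendsto c atTop (𝓝 c₀)) :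
    ∀ᵐ t ∂μ01, Tendsto (fun n => (x n - c n • oneL1 : Lp ℝ 1 μ01) t) atTop
      (𝓝 ((y - c₀ • oneL1 : Lp ℝ 1 μ01) t)) := by
  filter_upwards [ae_all_iff.2 fun n => coeFn_sub_smul_oneL1 (x n) (c n),
    coeFn_sub_smul_oneL1 y c₀, hx] with t hxt hyt ht
  simpa only [hxt, hyt] using ht.sub hc

theorem ae_nonneg_and_integral_le_of_tendsto_ae {a l : ℝ} {lam : ℕ → ℝ} {f : ℕ → Lp ℝ 1 μ01}
    {g : Lp ℝ 1 μ01} (hlam : ∀ n, 0 ≤ lam n) (hf : ∀ n, f n ∈ posProbC)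
    (hliml : Tendsto lam atTop (𝓝 l))
    (hlim : ∀ᵐ t ∂μ01, Tendsto
      (fun n => ((lam n • f n + (1 - lam n) • (a • oneL1) : Lp ℝ 1 μ01) : ℝ → ℝ) t)
      atTop (𝓝 (g t))) :
    0 ≤ᵐ[μ01] ⇑(g - ((1 - l) * a) • oneL1) ∧
      L1.integral (g - ((1 - l) * a) • oneL1) ≤ l := by
  have hF0 n : 0 ≤ᵐ[μ01] ⇑(lam n • f n) := by
    filter_upwards [Lp.coeFn_smul (lam n) (f n), (hf n).1] with t hsmul hft
    rw [hsmul]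
    exact mul_nonneg (hlam n) hft
  have hFlim := tendsto_ae_sub_smul_oneL1 (c := fun n => (1 - lam n) * a) hlim
    ((tendsto_const_nhds.sub hliml).mul_const a)
  simp only [smul_smul, add_sub_cancel_right] at hFlim
  refine ⟨ae_nonneg_of_tendsto_ae hF0 hFlim, ?_⟩
  rw [L1.integral_eq_integral]
  refine integral_le_of_tendsto_ae (fun n => L1.integrable_coeFn _) hF0
    (L1.integrable_coeFn _) hFlim ?_
  simpa [← L1.integral_eq_integral, L1.integral_smul, L1.integral_of_mem_posProbC (hf _)]
    using hliml

/-- If `g_n = λ_n f_n + (1-λ_n)·a·𝟙` (with `f_n ∈ C`, `λ_n ∈ [0,1]`, `λ_n → λ`) converges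
almost everywhere to `g`, then there is `h ∈ C_a = conv(C ∪ {a𝟙})` with
`limsup ‖g_n - h‖ ≤ (1+a)·limsup ‖g_n - g‖`. -/
theorem exists_mem_convexHull_limsup_le
    (a : ℝ) (ha : a ∈ Set.Icc (0 : ℝ) 1)
    (lam : ℕ → ℝ) (hlam : ∀ n, lam n ∈ Set.Icc (0 : ℝ) 1)
    (l : ℝ) (hliml : Tendsto lam atTop (𝓝 l))
    (f : ℕ → Lp ℝ 1 μ01) (hf : ∀ n, f n ∈ posProbC)
    (g : Lp ℝ 1 μ01)
    (hae : ∀ᵐ t ∂μ01, Tendsto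
      (fun n => ((lam n • f n + (1 - lam n) • (a • oneL1) : Lp ℝ 1 μ01) : ℝ → ℝ) t)
      atTop (𝓝 ((g : ℝ → ℝ) t))) :
    ∃ h ∈ convexHull ℝ (posProbC ∪ {a • oneL1}),
      limsup (fun n => ‖(lam n • f n + (1 - lam n) • (a • oneL1)) - h‖) atTop ≤
        (1 + a) * limsup (fun n => ‖(lam n • f n + (1 - lam n) • (a • oneL1)) - g‖) atTop := by
  set G : ℕ → Lp ℝ 1 μ01 := fun n => lam n • f n + (1 - lam n) • (a • oneL1)
  obtain ⟨hu0, hcl⟩ := ae_nonneg_and_integral_le_of_tendsto_ae (fun n => (hlam n).1) hf hliml hae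
  set u : Lp ℝ 1 μ01 := g - ((1 - l) * a) • oneL1 with hu
  set c := L1.integral u
  have hl1 : l ≤ 1 := le_of_tendsto' hliml fun n => (hlam n).2
  have hg_int : L1.integral g = c + (1 - l) * a := by
    simp [c, hu, L1.integral_sub, L1.integral_smul, L1.integral_oneL1]
  have hbdd : IsBoundedUnder (· ≤ ·) atTop fun n => ‖G n - g‖ :=
    isBoundedUnder_of ⟨1 + a + ‖g‖, fun n => (norm_sub_le _ _).trans
      (by gcongr; exact norm_smul_add_smul_oneL1_le (hf n) (hlam n) ha.1)⟩
  have hL : l - c ≤ limsup (fun n => ‖G n - g‖) atTop := by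
    have := sub_le_limsup_norm_sub L1.integralCLM L1.norm_Integral_le_one g hbdd
      (I := l + (1 - l) * a) (by
        simp only [← L1.integral_eq, G, L1.integral_smul_add_smul_oneL1 (hf _)]
        exact hliml.add ((tendsto_const_nhds.sub hliml).mul_const a))
    rw [← L1.integral_eq, hg_int] at this
    linarith
  refine ⟨u + ((1 - c) * a) • oneL1, add_smul_oneL1_mem_convexHull hu0 (hcl.trans hl1) a, ?_⟩
  have hgh : ‖g - (u + ((1 - c) * a) • oneL1)‖ = a * (l - c) := by
    rw [norm_sub_rev, show u + ((1 - c) * a) • oneL1 - g = (a * (l - c)) • oneL1 by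
      rw [hu]; module, norm_smul, norm_oneL1, mul_one, Real.norm_of_nonneg]
    exact mul_nonneg ha.1 (sub_nonneg.2 hcl)
  calc _ ≤ limsup (fun n => ‖G n - g‖) atTop + a * (l - c) :=
        hgh ▸ limsup_norm_sub_le_add g _ hbdd
    _ ≤ _ := by nlinarith [ha.1]
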